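/- Let U be a nonsingular 𝒰-matrix in standard 2×2 block form U = [[U_J, α 𝟏𝟏ᵗ], [b_K 𝟏ᵗ, U_K]] with α μ̄_J < 1, μ_J := U_J⁻¹𝟏 ≥ 0 and ν_J := (U_Jᵗ)⁻¹𝟏 ≥ 0 entrywise, α ≥ 0. Then for two distinct indices i, j both in the K-block with j ≠ n or both with i ≠ n, we have (U⁻¹)_{ij} < 0 if and only if (U_K⁻¹)_{ij} < 0. -/

import Mathlib

/-!
By the Schur complement formula, the `(K, K)` block of `U⁻¹` is `U_K⁻¹` plus the rank-one
correction `c • e_K (𝟏ᵗ U_K⁻¹)`, and `𝟏ᵗ U_K⁻¹ = ν_Kᵗ` is a multiple of `e_nᵗ`; so the correction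
lives on the `(n, n)` entry only. The Schur complement `U_J - α 𝟏𝟏ᵗ` is nonsingular by the matrix
determinant lemma: its determinant is `det U_J * (1 - α μ̄_J)`.
-/

open Matrix

namespace Matrix

variable {m n R : Type*} [Fintype m] [Fintype n] [DecidableEq m] [DecidableEq n] [CommRing R]

theorem inv_fromBlocks_apply_inr_inr {A : Matrix m m R} {B : Matrix m n R} {C : Matrix n m R}
    {D : Matrix n n R} (hD : IsUnit D.det) (hS : IsUnit (A - B * D⁻¹ * C).det) (i j : n) :
    (fromBlocks A B C D)⁻¹ (.inr i) (.inr j)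
      = D⁻¹ i j + (D⁻¹ * C * (A - B * D⁻¹ * C)⁻¹ * B * D⁻¹) i j := by
  let := D.invertibleOfIsUnitDet hD
  let := (A - B * ⅟D * C).invertibleOfIsUnitDet (by rwa [invOf_eq_nonsing_inv])
  let := fromBlocks₂₂Invertible A B C D
  rw [← invOf_eq_nonsing_inv, invOf_fromBlocks₂₂_eq]
  simp only [invOf_eq_nonsing_inv, fromBlocks_apply₂₂, add_apply]

theorem det_sub_vecMulVec {A : Matrix m m R} (hA : IsUnit A.det) (x z : m → R) :
    (A - vecMulVec x z).det = A.det * (1 - z ⬝ᵥ (A⁻¹ *ᵥ x)) := by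
  rw [sub_eq_add_neg, ← neg_vecMulVec, vecMulVec_eq Unit, det_add_replicateCol_mul_replicateRow hA,
    det_unique (1 + _), add_apply, one_apply_eq, Matrix.mul_assoc, ← replicateCol_mulVec,
    replicateRow_mul_replicateCol_apply, mulVec_neg, dotProduct_neg, sub_eq_add_neg]

theorem inv_fromBlocks_vecMulVec_apply_inr_inr {A : Matrix m m R} {D : Matrix n n R}
    (x z : m → R) (y e : n → R) (hD : IsUnit D.det)
    (hS : IsUnit (A - (y ⬝ᵥ e) • vecMulVec x z).det) (i j : n) :
    (fromBlocks A (vecMulVec x y) (vecMulVec (D *ᵥ e) z) D)⁻¹ (.inr i) (.inr j)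
      = D⁻¹ i j + e i * ((z ᵥ* (A - (y ⬝ᵥ e) • vecMulVec x z)⁻¹ ⬝ᵥ x) * (y ᵥ* D⁻¹) j) := by
  have hDC : D⁻¹ * vecMulVec (D *ᵥ e) z = vecMulVec e z := by
    rw [mul_vecMulVec, mulVec_mulVec, nonsing_inv_mul D hD, one_mulVec]
  have hSchur : vecMulVec x y * D⁻¹ * vecMulVec (D *ᵥ e) z = (y ⬝ᵥ e) • vecMulVec x z := by
    rw [Matrix.mul_assoc, hDC, vecMulVec_mul_vecMulVec, vecMulVec_smul]
  rw [inv_fromBlocks_apply_inr_inr hD (hSchur ▸ hS), hSchur, hDC, vecMulVec_mul,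
    vecMulVec_mul_vecMulVec, vecMulVec_mul, smul_vecMul, vecMulVec_apply, Pi.smul_apply, smul_eq_mul]

end Matrix

theorem link_KK_block_general (m k : ℕ)
    (UJ : Matrix (Fin m) (Fin m) ℝ) (UK : Matrix (Fin (k + 1)) (Fin (k + 1)) ℝ)
    (α : ℝ) (hJ : IsUnit UJ.det) (hK : IsUnit UK.det)
    (eK : Fin (k + 1) → ℝ) (heK : eK = Pi.single (Fin.last k) 1)
    (μJ : Fin m → ℝ) (hμJ : μJ = UJ⁻¹ *ᵥ (fun _ => 1))
    (hα : α * (∑ i, μJ i) < 1)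
    (hνK : (UKᵀ)⁻¹ *ᵥ (fun _ => (1:ℝ))
      = (UK (Fin.last k) (Fin.last k))⁻¹ • (Pi.single (Fin.last k) 1 : Fin (k + 1) → ℝ))
    (U : Matrix (Fin m ⊕ Fin (k + 1)) (Fin m ⊕ Fin (k + 1)) ℝ)
    (hU : U = fromBlocks UJ (α • vecMulVec (fun _ => 1) (fun _ => 1))
      (vecMulVec (UK *ᵥ eK) (fun _ => 1)) UK) :
    ∀ (i j : Fin (k + 1)), i ≠ j → (i ≠ Fin.last k ∨ j ≠ Fin.last k) →
      (U⁻¹ (Sum.inr i) (Sum.inr j) < 0 ↔ UK⁻¹ i j < 0) := by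
  intro i j _ hij
  simp only [← Pi.one_def] at hμJ hνK hU
  have hS : IsUnit (UJ - ((1 : Fin (k + 1) → ℝ) ⬝ᵥ eK) • vecMulVec (α • 1) 1).det := by
    rw [heK, one_dotProduct, Finset.sum_pi_single', if_pos (Finset.mem_univ _), one_smul,
      det_sub_vecMulVec hJ, mulVec_smul, dotProduct_smul, ← hμJ, one_dotProduct, smul_eq_mul]
    exact hJ.mul (isUnit_iff_ne_zero.mpr (sub_ne_zero.mpr hα.ne'))
  have hcorr : eK i * (1 ᵥ* UK⁻¹) j = 0 := by
    rw [← mulVec_transpose, transpose_nonsing_inv, hνK, heK]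
    rcases hij with h | h <;> simp [Pi.single_eq_of_ne h]
  have hentry : U⁻¹ (.inr i) (.inr j) = UK⁻¹ i j := by
    rw [hU, ← smul_vecMulVec, inv_fromBlocks_vecMulVec_apply_inr_inr _ _ _ _ hK hS, mul_left_comm,
      hcorr, mul_zero, add_zero]
  rw [hentry]

theorem link_KK_block (m k : ℕ)
    (UJ : Matrix (Fin m) (Fin m) ℝ) (UK : Matrix (Fin (k + 1)) (Fin (k + 1)) ℝ)
    (α : ℝ) (hJ : IsUnit UJ.det) (hK : IsUnit UK.det)
    (eK : Fin (k + 1) → ℝ) (heK : eK = Pi.single (Fin.last k) 1)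
    (μJ : Fin m → ℝ) (hμJ : μJ = UJ⁻¹ *ᵥ (fun _ => 1))
    (νJ : Fin m → ℝ) (hνJ : νJ = (UJᵀ)⁻¹ *ᵥ (fun _ => 1))
    (hμJnonneg : ∀ i, 0 ≤ μJ i) (hνJnonneg : ∀ j, 0 ≤ νJ j) (hαnonneg : 0 ≤ α)
    (hα : α * (∑ i, μJ i) < 1)
    (hUnn : 0 < UK (Fin.last k) (Fin.last k))
    (hνK : (UKᵀ)⁻¹ *ᵥ (fun _ => (1:ℝ))
      = (UK (Fin.last k) (Fin.last k))⁻¹ • (Pi.single (Fin.last k) 1 : Fin (k + 1) → ℝ))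
    (U : Matrix (Fin m ⊕ Fin (k + 1)) (Fin m ⊕ Fin (k + 1)) ℝ)
    (hU : U = fromBlocks UJ (α • vecMulVec (fun _ => 1) (fun _ => 1))
      (vecMulVec (UK *ᵥ eK) (fun _ => 1)) UK) :
    ∀ (i j : Fin (k + 1)), i ≠ j → (i ≠ Fin.last k ∨ j ≠ Fin.last k) →
      (U⁻¹ (Sum.inr i) (Sum.inr j) < 0 ↔ UK⁻¹ i j < 0) :=
  link_KK_block_general m k UJ UK α hJ hK eK heK μJ hμJ hα hνK U hU
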